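/- arXiv:1106.6204 — 2 statements merged into one kernel-verified Lean document; each statement's English description precedes it below -/
import Mathlib

section
/- The function f(ζ) = (1/2)[ζ - log(2 - e^{-ζ})] for ζ > 0, extended by f(ζ) = 0 for ζ ≤ 0, is continuous at 0 and continuously differentiable on all of ℝ with f'(0) = 0, but its second derivative is discontinuous at ζ = 0; i.e., the pinning phase transition for simple random walk is second order. -/
/-!
On `ζ ≥ 0` the free energy is the analytic function `g ζ = ½[ζ - log(2 - e^{-ζ})]`, with
`g 0 = 0` and `g' ζ = (1 - e^{-ζ})/(2 - e^{-ζ})`, so `g' 0 = 0`: gluing `g` to the zero function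
at `0` gives a `C¹` function whose derivative is `g' (max ζ 0)`. That derivative has a kink at
`0`, with slope `0` on the left and `g'' 0 = 1` on the right, so `f` is not `C²` there.
-/

open Real Set

section Gluing

variable {f : ℝ → ℝ} {x a b : ℝ}

theorem HasDerivWithinAt.hasDerivAt_of_Iic_of_Ici (hl : HasDerivWithinAt f a (Iic x) x)
    (hr : HasDerivWithinAt f a (Ici x) x) : HasDerivAt f a x := by
  simpa only [Iic_union_Ici, hasDerivWithinAt_univ] using hl.union hr

theorem not_differentiableAt_of_hasDerivWithinAt_Iic_Ici (hl : HasDerivWithinAt f a (Iic x) x)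
    (hr : HasDerivWithinAt f b (Ici x) x) (hab : a ≠ b) : ¬ DifferentiableAt ℝ f x := by
  intro hf
  have ha : a = deriv f x :=
    (uniqueDiffOn_Iic x x self_mem_Iic).eq_deriv _ hl hf.hasDerivAt.hasDerivWithinAt
  have hb : b = deriv f x :=
    (uniqueDiffOn_Ici x x self_mem_Ici).eq_deriv _ hr hf.hasDerivAt.hasDerivWithinAt
  exact hab (ha.trans hb.symm)

end Gluing

section ZeroExtension

variable {g g' : ℝ → ℝ}

theorem hasDerivAt_ite_nonpos_zero (hg0 : g 0 = 0) (hg'0 : g' 0 = 0)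
    (hg : ∀ x, 0 ≤ x → HasDerivAt g (g' x) x) (x : ℝ) :
    HasDerivAt (fun y => if y ≤ 0 then 0 else g y) (g' (max x 0)) x := by
  rcases lt_trichotomy x 0 with hx | rfl | hx
  · rw [max_eq_right hx.le, hg'0]
    refine (hasDerivAt_const x (0 : ℝ)).congr_of_eventuallyEq ?_
    filter_upwards [Iio_mem_nhds hx] with y hy
    exact if_pos (le_of_lt hy)
  · rw [max_self, hg'0]
    refine HasDerivWithinAt.hasDerivAt_of_Iic_of_Ici ?_ ?_
    · exact (hasDerivWithinAt_const 0 _ 0).congr (fun y hy => if_pos hy) (if_pos le_rfl)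
    · refine (hg'0 ▸ hg 0 le_rfl).hasDerivWithinAt.congr (fun y hy => ?_) (by simp [hg0])
      rcases (mem_Ici.mp hy).eq_or_lt with rfl | hy
      · simp [hg0]
      · exact if_neg (not_le.mpr hy)
  · rw [max_eq_left hx.le]
    refine (hg x hx.le).congr_of_eventuallyEq ?_
    filter_upwards [Ioi_mem_nhds hx] with y hy
    exact if_neg (not_le.mpr hy)

theorem not_differentiableAt_comp_max_zero {c : ℝ} (hc : c ≠ 0) (hg' : HasDerivAt g' c 0) :
    ¬ DifferentiableAt ℝ (fun x => g' (max x 0)) 0 := by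
  refine not_differentiableAt_of_hasDerivWithinAt_Iic_Ici (a := 0) (b := c) ?_ ?_ hc.symm
  · exact (hasDerivWithinAt_const 0 _ (g' 0)).congr
      (fun y hy => by rw [max_eq_right (mem_Iic.mp hy)]) (by rw [max_self])
  · exact hg'.hasDerivWithinAt.congr (fun y hy => by rw [max_eq_left (mem_Ici.mp hy)])
      (by rw [max_self])

end ZeroExtension

noncomputable def pinningBranch (x : ℝ) : ℝ := 1 / 2 * (x - log (2 - exp (-x)))

noncomputable def pinningBranchDeriv (x : ℝ) : ℝ := (1 - exp (-x)) / (2 - exp (-x))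

theorem pinningBranch_zero : pinningBranch 0 = 0 := by
  norm_num [pinningBranch]

theorem pinningBranchDeriv_zero : pinningBranchDeriv 0 = 0 := by
  norm_num [pinningBranchDeriv]

theorem two_sub_exp_neg_pos {x : ℝ} (hx : 0 ≤ x) : 0 < 2 - exp (-x) := by
  have : exp (-x) ≤ 1 := exp_le_one_iff.mpr (neg_nonpos.mpr hx)
  linarith

theorem hasDerivAt_const_sub_exp_neg (c x : ℝ) :
    HasDerivAt (fun y => c - exp (-y)) (exp (-x)) x := by
  simpa using ((hasDerivAt_neg x).exp).const_sub c

theorem hasDerivAt_pinningBranch {x : ℝ} (hx : 2 - exp (-x) ≠ 0) :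
    HasDerivAt pinningBranch (pinningBranchDeriv x) x := by
  refine (((hasDerivAt_id x).sub ((hasDerivAt_const_sub_exp_neg 2 x).log hx)).const_mul
    (1 / 2)).congr_deriv ?_
  unfold pinningBranchDeriv
  field_simp
  ring

theorem hasDerivAt_pinningBranchDeriv {x : ℝ} (hx : 2 - exp (-x) ≠ 0) :
    HasDerivAt pinningBranchDeriv (exp (-x) / (2 - exp (-x)) ^ 2) x := by
  refine ((hasDerivAt_const_sub_exp_neg 1 x).div (hasDerivAt_const_sub_exp_neg 2 x)
    hx).congr_deriv ?_
  ring

theorem continuousOn_pinningBranchDeriv : ContinuousOn pinningBranchDeriv (Ici 0) :=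
  fun _ hx =>
    (hasDerivAt_pinningBranchDeriv (two_sub_exp_neg_pos hx).ne').continuousAt.continuousWithinAt

/-- The free energy `f(ζ) = ½[ζ - log(2 - e^{-ζ})]` for `ζ > 0`, extended by
`0` for `ζ ≤ 0`, is continuous, continuously differentiable on `ℝ` with
`f'(0) = 0`, but is not twice continuously differentiable at `0`: the phase
transition is second order. -/
theorem srw_pinning_second_order
    (f : ℝ → ℝ)
    (hf : ∀ ζ : ℝ, f ζ = if ζ ≤ 0 then 0 else (1 / 2) * (ζ - log (2 - exp (-ζ)))) :
    Continuous f ∧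
    (∃ f' : ℝ → ℝ, Continuous f' ∧ (∀ x, HasDerivAt f (f' x) x) ∧ f' 0 = 0) ∧
    ¬ ContDiffAt ℝ 2 f 0 := by
  obtain rfl : f = fun ζ => if ζ ≤ 0 then 0 else pinningBranch ζ := funext hf
  have hder : ∀ x, HasDerivAt (fun ζ => if ζ ≤ 0 then 0 else pinningBranch ζ)
      (pinningBranchDeriv (max x 0)) x :=
    hasDerivAt_ite_nonpos_zero pinningBranch_zero pinningBranchDeriv_zero
      (fun x hx => hasDerivAt_pinningBranch (two_sub_exp_neg_pos hx).ne')
  refine ⟨continuous_iff_continuousAt.mpr fun x => (hder x).continuousAt,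
    ⟨fun x => pinningBranchDeriv (max x 0), continuousOn_pinningBranchDeriv.comp_continuous
      (continuous_id.max continuous_const) (fun x => le_max_right x 0), hder,
      by simpa using pinningBranchDeriv_zero⟩, fun hC2 => ?_⟩
  have hslope : HasDerivAt pinningBranchDeriv 1 0 := by
    refine (hasDerivAt_pinningBranchDeriv (x := 0) (by norm_num)).congr_deriv ?_
    norm_num
  refine not_differentiableAt_comp_max_zero one_ne_zero hslope ?_
  rw [← funext fun x => (hder x).deriv]
  exact (hC2.derivWithin (m := 1) (by norm_num)).differentiableAt one_ne_zero
end

section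
/- Let R : ℕ → [0,∞) satisfy R(n) = c n^{-(1+a)}(1+o(1)) as n → ∞ with c > 0 and a ∈ (0,1), and let ψ(x) = ∑_{n≥0} R̄(n) x^n where R̄(n) = ∑_{k>n} R(k). Then as r ↓ 0, ψ(e^{-r}) = (c Γ(1-a)/a) r^{a-1} (1 + o(1)), where Γ(1-a) = ∫₀^∞ t^{-a} e^{-t} dt. -/
/-!
Tails of series with nonnegative terms inherit asymptotic equivalence, and comparing the tail of
`∑ k ^ (-(1 + a))` with `∫ₙ^∞ t ^ (-(1 + a)) dt` gives `R̄(n) ~ (c / a) n ^ (-a)`. An Abelian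
argument transfers this to the generating functions: if `bₙ ~ dₙ` with `dₙ ≥ 0` and
`∑ dₙ xⁿ → ∞`, the finitely many terms where `bₙ` and `dₙ` are not yet close become negligible,
so `∑ bₙ xⁿ ~ ∑ dₙ xⁿ`. Finally `r ^ (1 - a) ∑ n ^ (-a) e^(-rn)` is a Riemann sum of mesh `r` for
`∫₀^∞ t ^ (-a) e^(-t) dt = Γ(1 - a)`; since the integrand is antitone it lies between
`Γ(1 - a) - r ^ (1 - a) / (1 - a)` and `Γ(1 - a) + r ^ (1 - a)`.
-/

open Real Filter Topology
open Set MeasureTheory Asymptotics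

theorem summable_of_tsum_ne_zero {ι : Type*} {f : ι → ℝ} (h : ∑' i, f i ≠ 0) : Summable f := by
  by_contra hf
  exact h (tsum_eq_zero_of_not_summable hf)

namespace Asymptotics

theorem IsLittleO.tsum_nat_add {u v : ℕ → ℝ} (huv : u =o[atTop] v) (hv : ∀ n, 0 ≤ v n)
    (hvs : Summable v) :
    (fun n ↦ ∑' k, u (n + k)) =o[atTop] fun n ↦ ∑' k, v (n + k) := by
  refine isLittleO_iff.2 fun ε hε ↦ ?_
  obtain ⟨N, hN⟩ := eventually_atTop.1 (huv.def hε)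
  filter_upwards [eventually_ge_atTop N] with n hn
  have hvn : Summable fun k ↦ v (n + k) := by
    simpa only [add_comm n] using (summable_nat_add_iff n).2 hvs
  have htail : HasSum (fun k ↦ ε * v (n + k)) (ε * ∑' k, v (n + k)) := hvn.hasSum.mul_left ε
  refine (tsum_of_norm_bounded htail fun k ↦ ?_).trans_eq ?_
  · simpa [abs_of_nonneg (hv _)] using hN (n + k) (by omega)
  · rw [Real.norm_of_nonneg (tsum_nonneg fun k ↦ hv _)]

theorem IsEquivalent.tsum_nat_add {u v : ℕ → ℝ} (huv : u ~[atTop] v) (hv : ∀ n, 0 ≤ v n)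
    (hvs : Summable v) :
    (fun n ↦ ∑' k, u (n + k)) ~[atTop] fun n ↦ ∑' k, v (n + k) := by
  have hus : Summable u := summable_of_isBigO_nat hvs huv.isBigO
  refine (huv.isLittleO.tsum_nat_add hv hvs).congr_left fun n ↦ ?_
  simp only [Pi.sub_apply, add_comm n]
  exact ((summable_nat_add_iff n).2 hus).tsum_sub ((summable_nat_add_iff n).2 hvs)

theorem IsLittleO.tsum_mul_pow {u v : ℕ → ℝ} {l : Filter ℝ} (huv : u =o[atTop] v)
    (hv : ∀ n, 0 ≤ v n) (hl : ∀ᶠ x in l, x ∈ Icc 0 1)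
    (htop : Tendsto (fun x ↦ ∑' n, v n * x ^ n) l atTop) :
    (fun x ↦ ∑' n, u n * x ^ n) =o[l] fun x ↦ ∑' n, v n * x ^ n := by
  refine isLittleO_iff.2 fun ε hε ↦ ?_
  obtain ⟨N, hN⟩ := eventually_atTop.1 (huv.def (half_pos hε))
  set C := ∑ n ∈ Finset.range N, |u n|
  filter_upwards [hl, htop.eventually_gt_atTop 0, htop.eventually_ge_atTop (2 * C / ε)]
    with x ⟨hx0, hx1⟩ hpos hlarge
  have hvs : Summable fun n ↦ v n * x ^ n := summable_of_tsum_ne_zero hpos.ne'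
  have hbound : HasSum (fun n ↦ (if n < N then |u n| else 0) + ε / 2 * (v n * x ^ n))
      (C + ε / 2 * ∑' n, v n * x ^ n) := by
    refine HasSum.add ?_ (hvs.hasSum.mul_left _)
    convert hasSum_sum_of_ne_finset_zero (L := SummationFilter.unconditional ℕ)
      (s := Finset.range N) (f := fun n ↦ if n < N then |u n| else 0)
      fun n hn ↦ by simp_all using 1
    exact Finset.sum_congr rfl fun n hn ↦ by simp_all
  refine (tsum_of_norm_bounded hbound fun n ↦ ?_).trans ?_
  · have hxn0 : 0 ≤ x ^ n := pow_nonneg hx0 n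
    have hxn1 : x ^ n ≤ 1 := pow_le_one₀ hx0 hx1
    rw [norm_mul, Real.norm_of_nonneg hxn0, Real.norm_eq_abs]
    have hvx : 0 ≤ ε / 2 * (v n * x ^ n) := by have := hv n; positivity
    split_ifs with hn
    · linarith [mul_le_of_le_one_right (abs_nonneg (u n)) hxn1]
    · have hun := hN n (not_lt.1 hn)
      rw [Real.norm_of_nonneg (hv n), Real.norm_eq_abs] at hun
      linarith [mul_le_mul_of_nonneg_right hun hxn0]
  · rw [Real.norm_of_nonneg hpos.le]
    have : C ≤ ε / 2 * ∑' n, v n * x ^ n := by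
      rw [div_le_iff₀ hε] at hlarge; linarith
    linarith

theorem IsEquivalent.tsum_mul_pow {u v : ℕ → ℝ} {l : Filter ℝ} (huv : u ~[atTop] v)
    (hv : ∀ n, 0 ≤ v n) (hl : ∀ᶠ x in l, x ∈ Icc 0 1)
    (htop : Tendsto (fun x ↦ ∑' n, v n * x ^ n) l atTop) :
    (fun x ↦ ∑' n, u n * x ^ n) ~[l] fun x ↦ ∑' n, v n * x ^ n := by
  refine (huv.isLittleO.tsum_mul_pow hv hl htop).congr' ?_ EventuallyEq.rfl
  filter_upwards [htop.eventually_gt_atTop 0] with x hpos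
  have hvs : Summable fun n ↦ v n * x ^ n := summable_of_tsum_ne_zero hpos.ne'
  have hus : Summable fun n ↦ u n * x ^ n :=
    summable_of_isBigO_nat hvs (huv.isBigO.mul (isBigO_refl _ _))
  simp only [Pi.sub_apply, sub_mul]
  exact hus.tsum_sub hvs

theorem IsEquivalent.tsum_mul_exp_neg_pow {u v : ℕ → ℝ} (huv : u ~[atTop] v)
    (hv : ∀ n, 0 ≤ v n) (htop : Tendsto (fun r ↦ ∑' n, v n * exp (-r) ^ n) (𝓝[>] 0) atTop) :
    (fun r ↦ ∑' n, u n * exp (-r) ^ n) ~[𝓝[>] 0] fun r ↦ ∑' n, v n * exp (-r) ^ n := by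
  have hl : ∀ᶠ x in map (fun r ↦ exp (-r)) (𝓝[>] 0), x ∈ Icc 0 1 := eventually_map.2 <|
    eventually_mem_nhdsWithin.mono fun r (hr : 0 < r) ↦
      ⟨(exp_pos _).le, exp_le_one_iff.2 (by linarith)⟩
  exact (huv.tsum_mul_pow hv hl (tendsto_map'_iff.2 htop)).comp_tendsto tendsto_map

theorem IsEquivalent.of_le_of_le {α : Type*} {l : Filter α} {u v w : α → ℝ}
    (hw : w ~[l] v) (hwu : ∀ᶠ x in l, w x ≤ u x) (huv : ∀ᶠ x in l, u x ≤ v x) : u ~[l] v := by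
  refine IsBigO.trans_isLittleO (IsBigO.of_bound 1 ?_) hw
  filter_upwards [hwu, huv] with x h₁ h₂
  simp only [Pi.sub_apply, Real.norm_eq_abs, one_mul]
  rw [abs_of_nonpos (by linarith), abs_of_nonpos (by linarith)]
  linarith

theorem IsEquivalent.const_mul {α : Type*} {l : Filter α} {u v : α → ℝ} (h : u ~[l] v) (c : ℝ) :
    (fun x ↦ c * u x) ~[l] fun x ↦ c * v x :=
  (IsEquivalent.refl (u := fun _ ↦ c)).smul h

end Asymptotics

theorem integral_Ioi_rpow_neg_one_sub {a c : ℝ} (ha : 0 < a) (hc : 0 < c) :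
    ∫ t in Ioi c, t ^ (-(1 + a)) = c ^ (-a) / a := by
  rw [integral_Ioi_rpow_of_lt (by linarith) hc, show -(1 + a) + 1 = -a by ring, neg_div_neg_eq]

theorem tsum_rpow_nat_add_isEquivalent {a : ℝ} (ha : 0 < a) :
    (fun n : ℕ ↦ ∑' k : ℕ, ((n + 1 + k : ℕ) : ℝ) ^ (-(1 + a))) ~[atTop]
      fun n ↦ (n : ℝ) ^ (-a) / a := by
  set f : ℝ → ℝ := fun x ↦ x ^ (-(1 + a))
  have hanti : ∀ m : ℕ, 1 ≤ m → AntitoneOn f (Ici (m : ℝ)) := fun m hm x hx y _ hxy ↦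
    rpow_le_rpow_of_nonpos ((Nat.one_le_cast.2 hm).trans_lt' one_pos |>.trans_le hx) hxy
      (by linarith)
  have hnonneg : ∀ m : ℕ, ∀ t ∈ Ioi (m : ℝ), 0 ≤ f t := fun m t ht ↦
    rpow_nonneg ((Nat.cast_nonneg m).trans ht.le) _
  have hsucc : (fun n : ℕ ↦ ((n : ℝ) + 1) ^ (-a) / a) ~[atTop] fun n ↦ (n : ℝ) ^ (-a) / a := by
    have h : (fun n : ℕ ↦ (n : ℝ) + 1) ~[atTop] fun n ↦ (n : ℝ) :=
      IsEquivalent.refl.add_const_of_norm_tendsto_atTop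
        (tendsto_norm_atTop_atTop.comp tendsto_natCast_atTop_atTop)
    exact (h.rpow (fun n ↦ Nat.cast_nonneg n)).div IsEquivalent.refl
  refine hsucc.of_le_of_le ?_ ?_
  · filter_upwards [eventually_ge_atTop 1] with n hn
    have h := (hanti (n + 1) (by omega)).integral_le_tsum_comp_add (n + 1)
      (Real.summable_nat_rpow.2 (by linarith)) (hnonneg _)
    rw [integral_Ioi_rpow_neg_one_sub ha (by positivity)] at h
    refine le_of_le_of_eq (by exact_mod_cast h) (tsum_congr fun k ↦ ?_)
    simp only [f]; congr 2; omega
  · filter_upwards [eventually_ge_atTop 1] with n hn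
    have h := (hanti n hn).tsum_comp_add_le_integral n
      (integrableOn_Ioi_rpow_of_lt (by linarith) (by positivity)) (hnonneg n)
    rw [integral_Ioi_rpow_neg_one_sub ha (by positivity)] at h
    refine le_of_eq_of_le (tsum_congr fun k ↦ ?_) h
    simp only [f]; congr 2; omega

theorem AntitoneOn.mul_tsum_mem_Icc_integral_Ioi {f : ℝ → ℝ} {r : ℝ} (anti : AntitoneOn f (Ici r))
    (hr : 0 < r) (integrable : IntegrableOn f (Ioi r)) (nonneg : ∀ t ∈ Ioi r, 0 ≤ f t) :
    r * ∑' n : ℕ, f (r * (n + 1)) ∈ Icc (∫ t in Ioi r, f t) (r * f r + ∫ t in Ioi r, f t) := by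
  -- apply the integral test with unit mesh to `x ↦ f (r * x)` on `[1, ∞)`
  have hg : AntitoneOn (fun x ↦ f (r * x)) (Ici ((1 : ℕ) : ℝ)) := fun x hx y hy hxy ↦ by
    simp only [Nat.cast_one, mem_Ici] at hx hy
    exact anti (by simp only [mem_Ici]; nlinarith) (by simp only [mem_Ici]; nlinarith)
      (by nlinarith)
  have hnonneg : ∀ x ∈ Ioi ((1 : ℕ) : ℝ), 0 ≤ f (r * x) := fun x hx ↦
    nonneg _ (by simp only [Nat.cast_one, mem_Ioi] at hx ⊢; nlinarith)
  have hint : IntegrableOn (fun x ↦ f (r * x)) (Ioi ((1 : ℕ) : ℝ)) := by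
    simpa using (integrableOn_Ioi_comp_mul_left_iff f 1 hr).2 (by simpa using integrable)
  have hscale : ∫ x in Ioi ((1 : ℕ) : ℝ), f (r * x) = (∫ t in Ioi r, f t) / r := by
    simpa [inv_mul_eq_div] using integral_comp_mul_left_Ioi f 1 hr
  have hs := hg.summable_of_integrableOn_Ioi hint hnonneg
  have hlow := hg.integral_le_tsum_comp_add 1 hs hnonneg
  have hupp := hg.tsum_comp_add_le_integral 1 hint hnonneg
  rw [hscale] at hlow hupp
  push_cast at hlow hupp
  constructor
  · rwa [div_le_iff₀' hr] at hlow
  · rw [le_div_iff₀' hr] at hupp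
    have hs' := (summable_nat_add_iff 1).2 ((summable_nat_add_iff 1).2 hs)
    push_cast at hs'
    rw [tsum_eq_zero_add' (by simpa [add_assoc] using hs')]
    push_cast
    rw [zero_add, mul_one, mul_add]
    linarith

section GammaRiemannSum

variable {a : ℝ}

theorem integrableOn_rpow_neg_mul_exp_neg (ha : a < 1) :
    IntegrableOn (fun t : ℝ ↦ t ^ (-a) * exp (-t)) (Ioi 0) := by
  simpa [mul_comm] using GammaIntegral_convergent (show 0 < 1 - a by linarith)

theorem Gamma_one_sub_eq_integral (ha : a < 1) :
    Gamma (1 - a) = ∫ t in Ioi 0, t ^ (-a) * exp (-t) := by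
  simp [Gamma_eq_integral (show 0 < 1 - a by linarith), mul_comm]

theorem integral_Ioc_zero_rpow_neg_mul_exp_neg_le (ha : a < 1) {r : ℝ} (hr : 0 < r) :
    ∫ t in Ioc 0 r, t ^ (-a) * exp (-t) ≤ r ^ (1 - a) / (1 - a) := by
  calc ∫ t in Ioc 0 r, t ^ (-a) * exp (-t)
      ≤ ∫ t in Ioc 0 r, t ^ (-a) := by
        refine setIntegral_mono_on ((integrableOn_rpow_neg_mul_exp_neg ha).mono_set
          Ioc_subset_Ioi_self) ((intervalIntegrable_iff_integrableOn_Ioc_of_le hr.le).1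
            (intervalIntegral.intervalIntegrable_rpow' (by linarith))) measurableSet_Ioc
          fun t ht ↦ mul_le_of_le_one_right (rpow_nonneg ht.1.le _) ?_
        exact exp_le_one_iff.2 (by linarith [ht.1])
    _ = r ^ (1 - a) / (1 - a) := by
        rw [← intervalIntegral.integral_of_le hr.le, integral_rpow (Or.inl (by linarith)),
          zero_rpow (by linarith), show -a + 1 = 1 - a by ring, sub_zero]

theorem mul_tsum_rpow_neg_mul_exp_neg_eq (ha : a ≠ 0) {r : ℝ} (hr : 0 < r) :
    r * ∑' n : ℕ, (r * (n + 1)) ^ (-a) * exp (-(r * (n + 1))) =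
      r ^ (1 - a) * ∑' n : ℕ, (n : ℝ) ^ (-a) * exp (-r) ^ n := by
  have hshift : ∑' n : ℕ, ((n + 1 : ℕ) : ℝ) ^ (-a) * exp (-r) ^ (n + 1) =
      ∑' n : ℕ, (n : ℝ) ^ (-a) * exp (-r) ^ n := by
    refine Nat.succ_injective.tsum_eq (f := fun n : ℕ ↦ (n : ℝ) ^ (-a) * exp (-r) ^ n)
      fun n hn ↦ Nat.exists_eq_succ_of_ne_zero ?_ |>.imp fun _ h ↦ h.symm
    -- the `n = 0` term vanishes only because of the convention `0 ^ (-a) = 0` for `a ≠ 0`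
    rintro rfl
    simp [zero_rpow (neg_ne_zero.2 ha)] at hn
  rw [← hshift, ← tsum_mul_left, ← tsum_mul_left]
  refine tsum_congr fun n ↦ ?_
  rw [mul_rpow hr.le (by positivity), ← exp_nat_mul, sub_eq_add_neg, rpow_add hr, rpow_one]
  push_cast
  ring_nf

theorem tendsto_rpow_mul_tsum_rpow_neg_mul_exp_neg (ha0 : 0 < a) (ha1 : a < 1) :
    Tendsto (fun r ↦ r ^ (1 - a) * ∑' n : ℕ, (n : ℝ) ^ (-a) * exp (-r) ^ n) (𝓝[>] 0)
      (𝓝 (Gamma (1 - a))) := by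
  set f : ℝ → ℝ := fun t ↦ t ^ (-a) * exp (-t)
  have hint : IntegrableOn f (Ioi 0) := integrableOn_rpow_neg_mul_exp_neg ha1
  have hnonneg : ∀ t ∈ Ioi (0 : ℝ), 0 ≤ f t := fun t ht ↦
    mul_nonneg (rpow_nonneg (le_of_lt ht) _) (exp_pos _).le
  have hanti : AntitoneOn f (Ioi 0) := fun x hx y _ hxy ↦
    mul_le_mul (rpow_le_rpow_of_nonpos hx hxy (by linarith)) (exp_le_exp.2 (by linarith))
      (exp_pos _).le (rpow_nonneg (le_of_lt hx) _)
  have hpow : Tendsto (fun r : ℝ ↦ r ^ (1 - a)) (𝓝[>] 0) (𝓝 0) := by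
    simpa [zero_rpow (show 1 - a ≠ 0 by linarith)] using
      ((continuousAt_rpow_const 0 (1 - a) (Or.inr (by linarith))).tendsto).mono_left
        nhdsWithin_le_nhds
  have hbounds : ∀ r > 0,
      Gamma (1 - a) - r ^ (1 - a) / (1 - a) ≤
        r ^ (1 - a) * ∑' n : ℕ, (n : ℝ) ^ (-a) * exp (-r) ^ n ∧
      r ^ (1 - a) * ∑' n : ℕ, (n : ℝ) ^ (-a) * exp (-r) ^ n ≤ r ^ (1 - a) + Gamma (1 - a) := by
    intro r hr
    obtain ⟨hlow, hupp⟩ := (hanti.mono (Ici_subset_Ioi.2 hr)).mul_tsum_mem_Icc_integral_Ioi hr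
      (hint.mono_set (Ioi_subset_Ioi hr.le)) fun t ht ↦ hnonneg t (lt_trans hr ht)
    rw [mul_tsum_rpow_neg_mul_exp_neg_eq ha0.ne' hr] at hlow hupp
    have hsplit : Gamma (1 - a) = (∫ t in Ioc 0 r, f t) + ∫ t in Ioi r, f t := by
      rw [Gamma_one_sub_eq_integral ha1, ← setIntegral_union Ioc_disjoint_Ioi_same
        measurableSet_Ioi (hint.mono_set Ioc_subset_Ioi_self)
        (hint.mono_set (Ioi_subset_Ioi hr.le)), Ioc_union_Ioi_eq_Ioi hr.le]
    have hhead := integral_Ioc_zero_rpow_neg_mul_exp_neg_le ha1 hr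
    have hhead0 : 0 ≤ ∫ t in Ioc 0 r, f t :=
      setIntegral_nonneg measurableSet_Ioc fun t ht ↦ hnonneg t ht.1
    have hfr : r * f r ≤ r ^ (1 - a) := by
      calc r * f r = r ^ (1 - a) * exp (-r) := by
            simp only [f, sub_eq_add_neg, rpow_add hr, rpow_one]; ring
        _ ≤ r ^ (1 - a) :=
            mul_le_of_le_one_right (rpow_nonneg hr.le _) (exp_le_one_iff.2 (by linarith))
    constructor <;> linarith
  refine tendsto_of_tendsto_of_tendsto_of_le_of_le' ?_ ?_
    (eventually_mem_nhdsWithin.mono fun r hr ↦ (hbounds r hr).1)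
    (eventually_mem_nhdsWithin.mono fun r hr ↦ (hbounds r hr).2)
  · simpa using tendsto_const_nhds.sub (hpow.div_const (1 - a))
  · simpa using hpow.add_const (Gamma (1 - a))

theorem tsum_rpow_neg_mul_exp_neg_isEquivalent (ha0 : 0 < a) (ha1 : a < 1) :
    (fun r ↦ ∑' n : ℕ, (n : ℝ) ^ (-a) * exp (-r) ^ n) ~[𝓝[>] 0]
      fun r ↦ Gamma (1 - a) * r ^ (a - 1) := by
  refine isEquivalent_of_tendsto_one ?_
  have hΓ : Gamma (1 - a) ≠ 0 := (Gamma_pos_of_pos (by linarith)).ne'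
  have h := (tendsto_rpow_mul_tsum_rpow_neg_mul_exp_neg ha0 ha1).div_const (Gamma (1 - a))
  rw [div_self hΓ] at h
  refine h.congr' (eventually_mem_nhdsWithin.mono fun r (hr : 0 < r) ↦ ?_)
  rw [Pi.div_apply, show a - 1 = -(1 - a) by ring, rpow_neg hr.le]
  field_simp

end GammaRiemannSum

theorem isEquivalent_tsum_nat_add_of_isEquivalent_rpow {R : ℕ → ℝ} {c a : ℝ} (hc : 0 ≤ c) (ha : 0 < a)
    (hR : R ~[atTop] fun n ↦ c * (n : ℝ) ^ (-(1 + a))) :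
    (fun n ↦ ∑' k, R (n + 1 + k)) ~[atTop] fun n ↦ c / a * (n : ℝ) ^ (-a) := by
  have htail := (hR.tsum_nat_add (fun n ↦ by positivity)
    ((Real.summable_nat_rpow.2 (by linarith)).mul_left c)).comp_tendsto (tendsto_add_atTop_nat 1)
  refine htail.trans (((tsum_rpow_nat_add_isEquivalent ha).const_mul c).congr_left
    (.of_eq (funext fun n ↦ ?_)) |>.congr_right (.of_eq (funext fun n ↦ ?_)))
  · simp only [Function.comp_apply, tsum_mul_left]
  · ring

theorem heavy_tail_generating_function_asymptotics_general
    (R : ℕ → ℝ) (c a : ℝ) (hc : 0 < c) (ha0 : 0 < a) (ha1 : a < 1)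
    (hasym : Tendsto (fun n : ℕ => R n / (c * (n : ℝ) ^ (-(1 + a)))) atTop (𝓝 1))
    (Rbar : ℕ → ℝ) (hRbar : ∀ n, Rbar n = ∑' k : ℕ, R (n + 1 + k))
    (ψ : ℝ → ℝ) (hψ : ∀ x, ψ x = ∑' n : ℕ, Rbar n * x ^ n)
    (G : ℝ) (hG : G = ∫ t in Set.Ioi (0 : ℝ), t ^ (-a) * exp (-t)) :
    Tendsto (fun r : ℝ => ψ (exp (-r)) / (c * G / a * r ^ (a - 1)))
      (𝓝[>] 0) (𝓝 1) := by
  rw [← Gamma_one_sub_eq_integral ha1] at hG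
  subst hG
  have hRbar_equiv : Rbar ~[atTop] fun n ↦ c / a * (n : ℝ) ^ (-a) :=
    funext hRbar ▸ isEquivalent_tsum_nat_add_of_isEquivalent_rpow hc.le ha0 (isEquivalent_of_tendsto_one hasym)
  have hcomparison : (fun r ↦ ∑' n : ℕ, c / a * (n : ℝ) ^ (-a) * exp (-r) ^ n) ~[𝓝[>] 0]
      fun r ↦ c * Gamma (1 - a) / a * r ^ (a - 1) := by
    refine ((tsum_rpow_neg_mul_exp_neg_isEquivalent ha0 ha1).const_mul (c / a)).congr_left
      (.of_eq (funext fun r ↦ ?_)) |>.congr_right (.of_eq (funext fun r ↦ ?_))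
    · simp only [mul_assoc, tsum_mul_left]
    · ring
  have hΓ : 0 < Gamma (1 - a) := Gamma_pos_of_pos (by linarith)
  have htop := hcomparison.symm.tendsto_atTop <|
    (tendsto_rpow_neg_nhdsGT_zero (by linarith)).const_mul_atTop (by positivity)
  have hψ_equiv := (hRbar_equiv.tsum_mul_exp_neg_pow (fun n ↦ by positivity) htop).trans hcomparison
  refine (isEquivalent_iff_tendsto_one ?_).1 ((funext fun r ↦ hψ (exp (-r))) ▸ hψ_equiv)
  filter_upwards [self_mem_nhdsWithin] with r (hr : 0 < r)
  positivity

/-- Tauberian asymptotics: if `R(n) = c n^{-(1+a)} (1+o(1))` with `c > 0`,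
`a ∈ (0,1)`, and `ψ(x) = ∑_{n ≥ 0} R̄(n) x^n` with `R̄(n) = ∑_{k > n} R(k)`,
then `ψ(e^{-r}) = (c Γ(1-a)/a) r^{a-1} (1+o(1))` as `r ↓ 0`, where
`Γ(1-a) = ∫₀^∞ t^{-a} e^{-t} dt`. -/
theorem heavy_tail_generating_function_asymptotics
    (R : ℕ → ℝ) (c a : ℝ) (hc : 0 < c) (ha0 : 0 < a) (ha1 : a < 1)
    (hnn : ∀ n, 0 ≤ R n) (hsum : Summable R)
    (hasym : Tendsto (fun n : ℕ => R n / (c * (n : ℝ) ^ (-(1 + a)))) atTop (𝓝 1))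
    (Rbar : ℕ → ℝ) (hRbar : ∀ n, Rbar n = ∑' k : ℕ, R (n + 1 + k))
    (ψ : ℝ → ℝ) (hψ : ∀ x, ψ x = ∑' n : ℕ, Rbar n * x ^ n)
    (G : ℝ) (hG : G = ∫ t in Set.Ioi (0 : ℝ), t ^ (-a) * exp (-t)) :
    Tendsto (fun r : ℝ => ψ (exp (-r)) / (c * G / a * r ^ (a - 1)))
      (𝓝[>] 0) (𝓝 1) :=
  heavy_tail_generating_function_asymptotics_general R c a hc ha0 ha1 hasym Rbar hRbar ψ hψ G hG
end
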